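/- arXiv:2407.05911 — 2 statements merged into one kernel-verified Lean document; each statement's English description precedes it below -/
import Mathlib

section
/- Let D be a dyadic lattice in ℝ^d and let w be a weight such that w(H) = +∞ for every quadrant H of D. Let 1 ≤ p ≤ q ≤ ∞ and α ∈ [0, d] satisfy 1/q + α/d = 1/p. Then ‖M^D_{α,w} f‖_{L^{q,∞}(ℝ^d, w dx)} ≤ ‖f‖_{L^p(ℝ^d, w dx)} for all f ∈ L^p(ℝ^d, w dx). -/
/-!
By Hölder's inequality, the fractional average of `f` over a cube `Q` satisfies
`w(Q)^{α/d-1} ∫_Q |f| w ≤ ‖f‖_{L^p(Q,w)} w(Q)^{-1/q}`. For `q = ∞` this is already the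
bound. For `q < ∞`, every dyadic cube on which the average exceeds `t` has `w(Q) ≤ (‖f‖_p / t)^q`;
since quadrants have infinite `w`-measure, it lies in a maximal such cube. The maximal cubes
are disjoint and cover `{M^D_{α,w} f > t}`, and summing `t^q w(Q) ≤ ‖f‖_{L^p(Q,w)}^q` over
them gives `t^q w({M^D_{α,w} f > t}) ≤ ‖f‖_p^q`, because `ℓ^p ⊆ ℓ^q` for `p ≤ q`.
-/

open MeasureTheory ENNReal NNReal Set

noncomputable section

/-- A half-open axis-parallel cube in `ℝ^d`, given by its corner and (positive) sidelength. -/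
structure Cube (d : ℕ) where
  corner : Fin d → ℝ
  side : ℝ
  side_pos : 0 < side

namespace Cube

variable {d : ℕ}

/-- The set of points of the cube: `[x_1, x_1+l) × ⋯ × [x_d, x_d+l)`. -/
def toSet (Q : Cube d) : Set (Fin d → ℝ) :=
  {y | ∀ i, Q.corner i ≤ y i ∧ y i < Q.corner i + Q.side}

/-- The translate `Q + l(Q) m` of a cube. -/
def translate (Q : Cube d) (m : Fin d → ℤ) : Cube d :=
  ⟨fun i => Q.corner i + Q.side * (m i : ℝ), Q.side, Q.side_pos⟩

/-- The corner child `x(Q) + (1/2)(Q - x(Q))` of a cube. -/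
def cornerChild (Q : Cube d) : Cube d :=
  ⟨Q.corner, Q.side / 2, by have := Q.side_pos; linarith⟩

/-- The threefold expansion `x(Q) + 3(Q - x(Q))` of a cube from its corner. -/
def expand3 (Q : Cube d) : Cube d :=
  ⟨Q.corner, 3 * Q.side, by have := Q.side_pos; linarith⟩

/-- The dilate `D_c Q`: cube with the same center as `Q` and sidelength `c·l(Q)`. -/
def dilate (Q : Cube d) (c : ℝ) (hc : 0 < c) : Cube d :=
  ⟨fun i => Q.corner i + Q.side / 2 - c * Q.side / 2, c * Q.side, by
    have := Q.side_pos; positivity⟩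

end Cube

/-- A dyadic lattice in `ℝ^d`: a family of generations of cubes, each generation formed by
all translates of one of its cubes, and each generation containing a cube whose corner child
belongs to the next generation. -/
structure DyadicLattice (d : ℕ) where
  gen : ℤ → Set (Cube d)
  gen_translates : ∀ k, ∃ Q ∈ gen k, gen k = {R | ∃ m : Fin d → ℤ, R = Q.translate m}
  cornerChild_mem : ∀ k, ∃ Q ∈ gen k, Q.cornerChild ∈ gen (k + 1)

/-- The collection of all cubes of a dyadic lattice. -/
def DyadicLattice.cubes {d : ℕ} (D : DyadicLattice d) : Set (Cube d) := ⋃ k, D.gen k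

/-- The quadrant of a dyadic lattice containing `x`: the union of all cubes of the lattice
containing `x`. -/
def DyadicLattice.quadrant {d : ℕ} (D : DyadicLattice d) (x : Fin d → ℝ) :
    Set (Fin d → ℝ) :=
  ⋃ Q ∈ {Q : Cube d | Q ∈ D.cubes ∧ x ∈ Q.toSet}, Q.toSet

/-- A weight: a locally integrable, a.e. positive (and finite) function. -/
def IsWeight {d : ℕ} (w : (Fin d → ℝ) → ℝ) : Prop :=
  LocallyIntegrable w volume ∧ ∀ᵐ x ∂(volume : Measure (Fin d → ℝ)), 0 < w x

/-- The measure `w dx` associated to a weight. -/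
def wMeasure {d : ℕ} (w : (Fin d → ℝ) → ℝ) : Measure (Fin d → ℝ) :=
  volume.withDensity fun x => ENNReal.ofReal (w x)

/-- `w(E) = ∫_E w dx`. -/
def wInt {d : ℕ} (w : (Fin d → ℝ) → ℝ) (E : Set (Fin d → ℝ)) : ℝ≥0∞ :=
  ∫⁻ x in E, ENNReal.ofReal (w x)

/-- The `L^q` norm (with `q = ∞` allowed) of an `ℝ≥0∞`-valued function. -/
def eLpNormENN {X : Type*} [MeasurableSpace X] (g : X → ℝ≥0∞) (q : ℝ≥0∞)
    (μ : Measure X) : ℝ≥0∞ :=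
  if q = ∞ then essSup g μ
  else (∫⁻ x, g x ^ q.toReal ∂μ) ^ (1 / q.toReal)

/-- The weak `L^q` quasinorm (with `q = ∞` allowed, interpreted as the `L^∞` norm) of an
`ℝ≥0∞`-valued function: `sup_{t>0} t · μ{g > t}^{1/q}`. -/
def wnormENN {X : Type*} [MeasurableSpace X] (g : X → ℝ≥0∞) (q : ℝ≥0∞)
    (μ : Measure X) : ℝ≥0∞ :=
  if q = ∞ then essSup g μ
  else ⨆ t : ℝ≥0, (t : ℝ≥0∞) * μ {x | (t : ℝ≥0∞) < g x} ^ (1 / q.toReal)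

/-- The weighted dyadic fractional maximal operator
`M^D_{α,w} f(x) = sup_{Q ∈ D, x ∈ Q} w(Q)^{α/d-1} ∫_Q |f| w`. -/
def MwDyadic {d : ℕ} (D : DyadicLattice d) (α : ℝ) (w f : (Fin d → ℝ) → ℝ)
    (x : Fin d → ℝ) : ℝ≥0∞ :=
  ⨆ (Q : Cube d) (_ : Q ∈ D.cubes) (_ : x ∈ Q.toSet),
    wInt w Q.toSet ^ (α / (d : ℝ) - 1) *
      ∫⁻ y in Q.toSet, (‖f y‖₊ : ℝ≥0∞) * ENNReal.ofReal (w y)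

/-- The dyadic fractional maximal operator `M^D_α f(x) = sup_{Q ∈ D, x ∈ Q} |Q|^{α/d} ⨍_Q |f|`. -/
def MfracDyadic {d : ℕ} (D : DyadicLattice d) (α : ℝ) (f : (Fin d → ℝ) → ℝ)
    (x : Fin d → ℝ) : ℝ≥0∞ :=
  ⨆ (Q : Cube d) (_ : Q ∈ D.cubes) (_ : x ∈ Q.toSet),
    volume Q.toSet ^ (α / (d : ℝ) - 1) * ∫⁻ y in Q.toSet, (‖f y‖₊ : ℝ≥0∞)

/-- The fractional maximal operator `M_α f(x) = sup_{Q ∋ x} |Q|^{α/d} ⨍_Q |f|`,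
supremum over all cubes containing `x`. -/
def Mfrac {d : ℕ} (α : ℝ) (f : (Fin d → ℝ) → ℝ) (x : Fin d → ℝ) : ℝ≥0∞ :=
  ⨆ (Q : Cube d) (_ : x ∈ Q.toSet),
    volume Q.toSet ^ (α / (d : ℝ) - 1) * ∫⁻ y in Q.toSet, (‖f y‖₊ : ℝ≥0∞)

/-- The weighted fractional maximal operator
`M_{α,w} f(x) = sup_{Q ∋ x} w(Q)^{α/d-1} ∫_Q |f| w`, supremum over all cubes containing `x`. -/
def Mwfrac {d : ℕ} (α : ℝ) (w f : (Fin d → ℝ) → ℝ) (x : Fin d → ℝ) : ℝ≥0∞ :=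
  ⨆ (Q : Cube d) (_ : x ∈ Q.toSet),
    wInt w Q.toSet ^ (α / (d : ℝ) - 1) *
      ∫⁻ y in Q.toSet, (‖f y‖₊ : ℝ≥0∞) * ENNReal.ofReal (w y)

/-- An `η`-sparse collection of cubes: each cube `Q` has a measurable subset `G(Q)` with
`|G(Q)| ≥ η|Q|`, the sets `G(Q)` being pairwise disjoint. -/
def IsSparseCubes {d : ℕ} (η : ℝ) (S : Set (Cube d)) : Prop :=
  ∃ G : Cube d → Set (Fin d → ℝ),
    (∀ Q ∈ S, G Q ⊆ Q.toSet ∧ MeasurableSet (G Q) ∧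
      ENNReal.ofReal η * volume Q.toSet ≤ volume (G Q)) ∧
    S.PairwiseDisjoint G

/-- The sparse operator `A_S^α f(x) = Σ_{Q ∈ S} χ_Q(x) |Q|^{α/d} ⨍_Q |f|`. -/
def sparseOp {d : ℕ} (α : ℝ) (S : Set (Cube d)) (f : (Fin d → ℝ) → ℝ)
    (x : Fin d → ℝ) : ℝ≥0∞ :=
  ∑' Q : S, (Q : Cube d).toSet.indicator
    (fun _ => volume (Q : Cube d).toSet ^ (α / (d : ℝ) - 1) *
      ∫⁻ y in (Q : Cube d).toSet, (‖f y‖₊ : ℝ≥0∞)) x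

/-- The `A_{p,q}^α` constant of a pair of weights:
`[v,w] = sup_Q |Q|^{α/d-1} (∫_Q v^{-p'/p})^{1/p'} (∫_Q w)^{1/q}` where `p' = p/(p-1)`. -/
def apqConst {d : ℕ} (p q α : ℝ) (v w : (Fin d → ℝ) → ℝ) : ℝ≥0∞ :=
  ⨆ Q : Cube d,
    volume Q.toSet ^ (α / (d : ℝ) - 1) *
      (∫⁻ x in Q.toSet, ENNReal.ofReal (v x ^ (-(p / (p - 1)) / p))) ^ ((p - 1) / p) *
      (∫⁻ x in Q.toSet, ENNReal.ofReal (w x)) ^ (1 / q)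

/-- The Muckenhoupt `A_∞` condition: `sup_Q exp(⨍_Q log w⁻¹) · ⨍_Q w < ∞`. -/
def IsAinfty {d : ℕ} (w : (Fin d → ℝ) → ℝ) : Prop :=
  ∃ C : ℝ, ∀ Q : Cube d,
    Real.exp (⨍ x in Q.toSet, Real.log (w x)⁻¹ ∂volume) *
      (⨍ x in Q.toSet, w x ∂volume) ≤ C

/-- The Euclidean norm of a point of `ℝ^d`. -/
def euclNorm {d : ℕ} (x : Fin d → ℝ) : ℝ := Real.sqrt (∑ i, x i ^ 2)

/-- The auxiliary maximal operator `M_{T,λ}` controlling oscillations of truncations of `T`: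
`M_{T,λ} f(x) = sup_{Q ∋ x} ess sup_{x',x'' ∈ Q} |T(fχ_{ℝ^d∖Q*})(x') − T(fχ_{ℝ^d∖Q*})(x'')|`. -/
def MT {d : ℕ} (T : ((Fin d → ℝ) → ℝ) → (Fin d → ℝ) → ℝ) (lam : ℝ) (hlam : 0 < lam)
    (f : (Fin d → ℝ) → ℝ) (x : Fin d → ℝ) : ℝ≥0∞ :=
  ⨆ (Q : Cube d) (_ : x ∈ Q.toSet),
    essSup
      (fun z : (Fin d → ℝ) × (Fin d → ℝ) =>
        (‖T (((Q.dilate lam hlam).toSet)ᶜ.indicator f) z.1 -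
            T (((Q.dilate lam hlam).toSet)ᶜ.indicator f) z.2‖₊ : ℝ≥0∞))
      ((volume.restrict Q.toSet).prod (volume.restrict Q.toSet))

end

namespace ENNReal

theorem tsum_rpow_le_rpow_tsum {ι : Type*} (a : ι → ℝ≥0∞) {r : ℝ} (hr : 1 ≤ r) :
    ∑' i, a i ^ r ≤ (∑' i, a i) ^ r := by
  have split : ∀ b : ℝ≥0∞, b ^ r = b * b ^ (r - 1) := fun b => by
    conv_lhs => rw [← add_sub_cancel 1 r, rpow_add_of_nonneg _ _ zero_le_one (by linarith),
      rpow_one]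
  calc ∑' i, a i ^ r ≤ ∑' i, a i * (∑' j, a j) ^ (r - 1) := by
        refine ENNReal.tsum_le_tsum fun i => ?_
        rw [split]
        gcongr
        exact ENNReal.le_tsum i
    _ = (∑' i, a i) ^ r := by rw [ENNReal.tsum_mul_right, ← split]

theorem rpow_mul_le_rpow_of_le_mul_rpow_neg_inv {t N a : ℝ≥0∞} {r : ℝ} (hr : 0 < r)
    (ha0 : a ≠ 0) (ha : a ≠ ∞) (h : t ≤ N * a ^ (-r⁻¹)) : t ^ r * a ≤ N ^ r := by
  calc t ^ r * a ≤ (N * a ^ (-r⁻¹)) ^ r * a := by gcongr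
    _ = N ^ r := by
      rw [mul_rpow_of_nonneg _ _ hr.le, ← rpow_mul, neg_mul, inv_mul_cancel₀ hr.ne',
        rpow_neg_one, mul_assoc, ENNReal.inv_mul_cancel ha0 ha, mul_one]

theorem toReal_inv_eq_add_of_inv_eq {p q : ℝ≥0∞} {β : ℝ} (hq : q ≠ 0) (hβ : 0 ≤ β)
    (h : p⁻¹ = q⁻¹ + ENNReal.ofReal β) : p.toReal⁻¹ = q.toReal⁻¹ + β := by
  have := congrArg ENNReal.toReal h
  rwa [toReal_inv, toReal_add (inv_ne_top.2 hq) ofReal_ne_top, toReal_inv,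
    toReal_ofReal hβ] at this

end ENNReal

section Measure

variable {X E : Type*} [MeasurableSpace X] [NormedAddCommGroup E] {μ : Measure X} {f : X → E}
  {p : ℝ≥0∞} {s : Set X}

theorem rpow_sub_one_mul_setLIntegral_enorm_le (hp : 1 ≤ p) (hf : AEStronglyMeasurable f μ)
    (hs0 : μ s ≠ 0) (hs : μ s ≠ ∞) (β : ℝ) :
    μ s ^ (β - 1) * ∫⁻ y in s, ‖f y‖ₑ ∂μ ≤
      eLpNorm f p (μ.restrict s) * μ s ^ (β - p.toReal⁻¹) := by
  have holder :
      ∫⁻ y in s, ‖f y‖ₑ ∂μ ≤ eLpNorm f p (μ.restrict s) * μ s ^ (1 - p.toReal⁻¹) := by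
    simpa [eLpNorm_one_eq_lintegral_enorm] using
      eLpNorm_le_eLpNorm_mul_rpow_measure_univ hp hf.restrict
  calc μ s ^ (β - 1) * ∫⁻ y in s, ‖f y‖ₑ ∂μ
      ≤ μ s ^ (β - 1) * (eLpNorm f p (μ.restrict s) * μ s ^ (1 - p.toReal⁻¹)) := by gcongr
    _ = eLpNorm f p (μ.restrict s) * μ s ^ (β - p.toReal⁻¹) := by
      rw [mul_left_comm, ← ENNReal.rpow_add _ _ hs0 hs]
      ring_nf

theorem rpow_sub_one_mul_setLIntegral_enorm_le_eLpNorm (hp : 1 ≤ p)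
    (hf : AEStronglyMeasurable f μ) (hs0 : μ s ≠ 0) (hs : μ s ≠ ∞) {β : ℝ}
    (hβ : β = p.toReal⁻¹) :
    μ s ^ (β - 1) * ∫⁻ y in s, ‖f y‖ₑ ∂μ ≤ eLpNorm f p μ := by
  refine (rpow_sub_one_mul_setLIntegral_enorm_le hp hf hs0 hs β).trans ?_
  rw [hβ, sub_self, ENNReal.rpow_zero, mul_one]
  exact eLpNorm_mono_measure f Measure.restrict_le_self

theorem rpow_mul_measure_le_of_lt_rpow_sub_one_mul_setLIntegral (hp : 1 ≤ p)
    (hf : AEStronglyMeasurable f μ) (hs0 : μ s ≠ 0) (hs : μ s ≠ ∞) {β r : ℝ} (hr : 0 < r)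
    (hexp : p.toReal⁻¹ = r⁻¹ + β) {t : ℝ≥0∞}
    (ht : t < μ s ^ (β - 1) * ∫⁻ y in s, ‖f y‖ₑ ∂μ) :
    t ^ r * μ s ≤ eLpNorm f p (μ.restrict s) ^ r := by
  have h := ht.le.trans (rpow_sub_one_mul_setLIntegral_enorm_le hp hf hs0 hs β)
  rw [show β - p.toReal⁻¹ = -r⁻¹ by linarith] at h
  exact ENNReal.rpow_mul_le_rpow_of_le_mul_rpow_neg_inv hr hs0 hs h

theorem tsum_eLpNorm_restrict_rpow_le {ι : Type*} {t : Set ι} {A : ι → Set X}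
    (ht : t.Countable) (hA : ∀ i ∈ t, MeasurableSet (A i)) (hdisj : t.PairwiseDisjoint A)
    (hp0 : p ≠ 0) (hp : p ≠ ∞) {r : ℝ} (hpr : p.toReal ≤ r) :
    ∑' i : t, eLpNorm f p (μ.restrict (A i)) ^ r ≤ eLpNorm f p μ ^ r := by
  have hpR : 0 < p.toReal := ENNReal.toReal_pos hp0 hp
  have rpow_eq : ∀ ν : Measure X,
      eLpNorm f p ν ^ r = (∫⁻ y, ‖f y‖ₑ ^ p.toReal ∂ν) ^ (r / p.toReal) := fun ν => by
    rw [eLpNorm_eq_lintegral_rpow_enorm_toReal hp0 hp, ← ENNReal.rpow_mul, one_div_mul_eq_div]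
  simp only [rpow_eq]
  calc ∑' i : t, (∫⁻ y in A i, ‖f y‖ₑ ^ p.toReal ∂μ) ^ (r / p.toReal)
      ≤ (∑' i : t, ∫⁻ y in A i, ‖f y‖ₑ ^ p.toReal ∂μ) ^ (r / p.toReal) :=
        ENNReal.tsum_rpow_le_rpow_tsum _ ((one_le_div hpR).2 hpr)
    _ = (∫⁻ y in ⋃ i ∈ t, A i, ‖f y‖ₑ ^ p.toReal ∂μ) ^ (r / p.toReal) := by
        rw [lintegral_biUnion ht hA hdisj]
    _ ≤ (∫⁻ y, ‖f y‖ₑ ^ p.toReal ∂μ) ^ (r / p.toReal) :=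
        ENNReal.rpow_le_rpow (setLIntegral_le_lintegral _ _)
          (div_nonneg (hpR.le.trans hpr) hpR.le)

theorem wnormENN_le_of_forall_rpow_mul_le {g : X → ℝ≥0∞} {q C : ℝ≥0∞} (hq0 : q ≠ 0)
    (hq : q ≠ ∞) (h : ∀ t : ℝ≥0∞, t ≠ 0 → t ^ q.toReal * μ {x | t < g x} ≤ C ^ q.toReal) :
    wnormENN g q μ ≤ C := by
  have hqR : 0 < q.toReal := ENNReal.toReal_pos hq0 hq
  rw [wnormENN, if_neg hq]
  refine iSup_le fun t => ?_
  rcases eq_or_ne (t : ℝ≥0∞) 0 with ht | ht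
  · simp [ht]
  rw [← ENNReal.rpow_le_rpow_iff hqR, ENNReal.mul_rpow_of_nonneg _ _ hqR.le,
    ← ENNReal.rpow_mul, one_div_mul_cancel hqR.ne', ENNReal.rpow_one]
  exact h t ht

end Measure

namespace Cube

variable {d : ℕ}

theorem toSet_eq_pi (Q : Cube d) :
    Q.toSet = Set.pi univ fun i => Ico (Q.corner i) (Q.corner i + Q.side) := by
  ext y
  simp [toSet]

theorem measurableSet_toSet (Q : Cube d) : MeasurableSet Q.toSet := by
  rw [toSet_eq_pi]
  exact MeasurableSet.univ_pi fun _ => measurableSet_Ico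

theorem volume_toSet_ne_zero (Q : Cube d) : volume Q.toSet ≠ 0 := by
  simp [toSet_eq_pi, volume_pi_pi, Q.side_pos]

theorem toSet_subset_Icc (Q : Cube d) :
    Q.toSet ⊆ Icc Q.corner fun i => Q.corner i + Q.side :=
  fun _ hy => ⟨fun i => (hy i).1, fun i => (hy i).2.le⟩

theorem toSet_subset_toSet {Q R : Cube d}
    (h : ∀ i, R.corner i ≤ Q.corner i ∧ Q.corner i + Q.side ≤ R.corner i + R.side) :
    Q.toSet ⊆ R.toSet :=
  fun _ hy i => ⟨(h i).1.trans (hy i).1, (hy i).2.trans_le (h i).2⟩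

theorem translate_translate (Q : Cube d) (m m' : Fin d → ℤ) :
    (Q.translate m).translate m' = Q.translate (m + m') := by
  simp only [translate, Pi.add_apply, Int.cast_add, mul_add, add_assoc]

theorem mem_toSet_translate_iff {Q : Cube d} {m : Fin d → ℤ} {x : Fin d → ℝ} :
    x ∈ (Q.translate m).toSet ↔ m = fun i => toIcoDiv Q.side_pos (Q.corner i) (x i) := by
  simp only [funext_iff, eq_comm (a := m _), toIcoDiv_eq_iff, zsmul_eq_mul, mem_Ico]
  simp only [toSet, translate, mem_ofPred_eq]
  refine forall_congr' fun i => ?_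
  constructor <;> rintro ⟨h₁, h₂⟩ <;> constructor <;> linarith

end Cube

namespace DyadicLattice

variable {d : ℕ} (D : DyadicLattice d)

theorem mem_gen_iff_of_mem {k : ℤ} {Q R : Cube d} (hQ : Q ∈ D.gen k) :
    R ∈ D.gen k ↔ ∃ m, R = Q.translate m := by
  obtain ⟨Q₀, -, hgen⟩ := D.gen_translates k
  rw [hgen] at hQ ⊢
  obtain ⟨m₀, rfl⟩ := hQ
  simp only [mem_ofPred_eq, Cube.translate_translate]
  exact ⟨fun ⟨m, hm⟩ => ⟨m - m₀, by rw [add_sub_cancel, hm]⟩,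
    fun ⟨m, hm⟩ => ⟨m₀ + m, hm⟩⟩

noncomputable def base (k : ℤ) : Cube d := (D.gen_translates k).choose

theorem base_mem_gen (k : ℤ) : D.base k ∈ D.gen k := (D.gen_translates k).choose_spec.1

/-- `Q_k(x)`, found as the translate of `base k` whose index is given coordinatewise by
`toIcoDiv`. -/
noncomputable def cubeAt (k : ℤ) (x : Fin d → ℝ) : Cube d :=
  (D.base k).translate fun i => toIcoDiv (D.base k).side_pos ((D.base k).corner i) (x i)

theorem cubeAt_mem_gen (k : ℤ) (x : Fin d → ℝ) : D.cubeAt k x ∈ D.gen k :=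
  (D.mem_gen_iff_of_mem (D.base_mem_gen k)).2 ⟨_, rfl⟩

theorem mem_cubeAt (k : ℤ) (x : Fin d → ℝ) : x ∈ (D.cubeAt k x).toSet :=
  Cube.mem_toSet_translate_iff.2 rfl

theorem eq_cubeAt {k : ℤ} {x : Fin d → ℝ} {Q : Cube d} (hQ : Q ∈ D.gen k)
    (hx : x ∈ Q.toSet) : Q = D.cubeAt k x := by
  obtain ⟨m, rfl⟩ := (D.mem_gen_iff_of_mem (D.base_mem_gen k)).1 hQ
  rw [cubeAt, ← Cube.mem_toSet_translate_iff.1 hx]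

theorem cubeAt_eq_of_mem {k : ℤ} {x y : Fin d → ℝ} (hy : y ∈ (D.cubeAt k x).toSet) :
    D.cubeAt k y = D.cubeAt k x :=
  (D.eq_cubeAt (D.cubeAt_mem_gen k x) hy).symm

theorem exists_parent {k : ℤ} {R : Cube d} (hR : R ∈ D.gen (k + 1)) :
    ∃ P ∈ D.gen k, R.toSet ⊆ P.toSet := by
  obtain ⟨Q, hQ, hchild⟩ := D.cornerChild_mem k
  obtain ⟨m, rfl⟩ := (D.mem_gen_iff_of_mem hchild).1 hR
  refine ⟨Q.translate fun i => m i / 2, (D.mem_gen_iff_of_mem hQ).2 ⟨_, rfl⟩,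
    Cube.toSet_subset_toSet fun i => ?_⟩
  obtain ⟨h₁, h₂⟩ : ((2 * (m i / 2) : ℤ) : ℝ) ≤ m i ∧
      (m i : ℝ) + 1 ≤ ((2 * (m i / 2) : ℤ) : ℝ) + 2 := by
    constructor <;> norm_cast <;> omega
  push_cast at h₁ h₂
  simp only [Cube.translate, Cube.cornerChild]
  constructor <;> nlinarith [Q.side_pos]

theorem antitone_cubeAt (x : Fin d → ℝ) : Antitone fun k => (D.cubeAt k x).toSet := by
  refine antitone_int_of_succ_le fun k => ?_
  obtain ⟨P, hP, hsub⟩ := D.exists_parent (D.cubeAt_mem_gen (k + 1) x)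
  rwa [D.eq_cubeAt hP (hsub (D.mem_cubeAt (k + 1) x))] at hsub

theorem cubeAt_eq_of_le_of_mem {k l : ℤ} (hkl : k ≤ l) {x y : Fin d → ℝ}
    (hy : y ∈ (D.cubeAt l x).toSet) : D.cubeAt k y = D.cubeAt k x :=
  D.cubeAt_eq_of_mem (D.antitone_cubeAt x hkl hy)

theorem mem_cubes_and_mem_iff {Q : Cube d} {x : Fin d → ℝ} :
    Q ∈ D.cubes ∧ x ∈ Q.toSet ↔ ∃ k, Q = D.cubeAt k x := by
  constructor
  · rintro ⟨hQ, hx⟩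
    obtain ⟨k, hk⟩ := mem_iUnion.1 hQ
    exact ⟨k, D.eq_cubeAt hk hx⟩
  · rintro ⟨k, rfl⟩
    exact ⟨mem_iUnion.2 ⟨k, D.cubeAt_mem_gen k x⟩, D.mem_cubeAt k x⟩

theorem quadrant_eq_iUnion (x : Fin d → ℝ) : D.quadrant x = ⋃ k, (D.cubeAt k x).toSet := by
  ext y
  simp only [quadrant, mem_iUnion, exists_prop, mem_ofPred_eq, D.mem_cubes_and_mem_iff]
  constructor
  · rintro ⟨Q, ⟨k, rfl⟩, hy⟩
    exact ⟨k, hy⟩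
  · rintro ⟨k, hy⟩
    exact ⟨_, ⟨k, rfl⟩, hy⟩

theorem measurableSet_quadrant (x : Fin d → ℝ) : MeasurableSet (D.quadrant x) := by
  rw [quadrant_eq_iUnion]
  exact .iUnion fun k => (D.cubeAt k x).measurableSet_toSet

theorem iSup_mem_cubes_eq_iSup_cubeAt (g : Cube d → ℝ≥0∞) (x : Fin d → ℝ) :
    ⨆ (Q : Cube d) (_ : Q ∈ D.cubes) (_ : x ∈ Q.toSet), g Q = ⨆ k, g (D.cubeAt k x) := by
  refine le_antisymm (iSup_le fun Q => iSup₂_le fun hQ hx => ?_)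
    (iSup_le fun k => le_iSup_of_le _ <| le_iSup₂_of_le ?_ ?_ le_rfl)
  · obtain ⟨k, rfl⟩ := D.mem_cubes_and_mem_iff.1 ⟨hQ, hx⟩
    exact le_iSup (fun k => g (D.cubeAt k x)) k
  exacts [(D.mem_cubes_and_mem_iff.2 ⟨k, rfl⟩).1, D.mem_cubeAt k x]

theorem cubes_countable : D.cubes.Countable := by
  refine countable_iUnion fun k => (countable_range fun m => (D.base k).translate m).mono ?_
  intro Q hQ
  obtain ⟨m, rfl⟩ := (D.mem_gen_iff_of_mem (D.base_mem_gen k)).1 hQ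
  exact ⟨m, rfl⟩

theorem bddBelow_setOf_measure_cubeAt_le {μ : Measure (Fin d → ℝ)} {x : Fin d → ℝ}
    (hx : μ (D.quadrant x) = ∞) {B : ℝ≥0∞} (hB : B ≠ ∞) :
    BddBelow {k | μ (D.cubeAt k x).toSet ≤ B} := by
  rw [quadrant_eq_iUnion, (D.antitone_cubeAt x).measure_iUnion] at hx
  obtain ⟨k₀, hk₀⟩ := lt_iSup_iff.1 (hx ▸ hB.lt_top)
  refine ⟨k₀, fun k hk => le_of_not_gt fun hlt => ?_⟩
  exact (hk₀.trans_le (measure_mono (D.antitone_cubeAt x hlt.le))).not_ge hk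

/-- The witness consists of the maximal cubes with property `P`, which exist because the
generations carrying `P` above a point are bounded below. -/
theorem exists_pairwiseDisjoint_cover (P : Cube d → Prop)
    (hP : ∀ x, BddBelow {k | P (D.cubeAt k x)}) :
    ∃ M : Set (Cube d), M.Countable ∧ M.PairwiseDisjoint Cube.toSet ∧ (∀ Q ∈ M, P Q) ∧
      {x | ∃ k, P (D.cubeAt k x)} ⊆ ⋃ Q ∈ M, Q.toSet := by
  set κ : (Fin d → ℝ) → ℤ := fun x => sInf {k | P (D.cubeAt k x)}
  have hκ : ∀ {x k}, P (D.cubeAt k x) → P (D.cubeAt (κ x) x) ∧ κ x ≤ k := fun {x k} hk =>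
    ⟨Int.csInf_mem ⟨k, hk⟩ (hP x), csInf_le (hP x) hk⟩
  have nested : ∀ {x y z}, x ∈ {x | ∃ k, P (D.cubeAt k x)} → κ x ≤ κ y →
      z ∈ (D.cubeAt (κ x) x).toSet → z ∈ (D.cubeAt (κ y) y).toSet →
      D.cubeAt (κ x) x = D.cubeAt (κ y) y := by
    rintro x y z ⟨k, hk⟩ hxy hzx hzy
    have hyx : D.cubeAt (κ x) y = D.cubeAt (κ x) x := by
      rw [← D.cubeAt_eq_of_le_of_mem hxy hzy, D.cubeAt_eq_of_mem hzx]
    have hyx' : κ y ≤ κ x := (hκ (hyx ▸ (hκ hk).1)).2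
    rw [le_antisymm hxy hyx'] at hyx ⊢
    exact hyx.symm
  refine ⟨(fun x => D.cubeAt (κ x) x) '' {x | ∃ k, P (D.cubeAt k x)},
    D.cubes_countable.mono ?_, ?_, ?_, fun x hx => mem_biUnion (mem_image_of_mem _ hx) ?_⟩
  · rintro _ ⟨x, -, rfl⟩
    exact (D.mem_cubes_and_mem_iff.2 ⟨_, rfl⟩).1
  · rintro _ ⟨x, hx, rfl⟩ _ ⟨y, hy, rfl⟩ hne
    refine disjoint_left.2 fun z hzx hzy => hne ?_
    rcases le_total (κ x) (κ y) with hxy | hyx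
    exacts [nested hx hxy hzx hzy, (nested hy hyx hzy hzx).symm]
  · rintro _ ⟨x, ⟨k, hk⟩, rfl⟩
    exact (hκ hk).1
  · exact D.mem_cubeAt _ x

end DyadicLattice

section Weight

variable {d : ℕ} {w : (Fin d → ℝ) → ℝ}

theorem wMeasure_apply {E : Set (Fin d → ℝ)} (hE : MeasurableSet E) :
    wMeasure w E = wInt w E :=
  withDensity_apply _ hE

theorem IsWeight.setLIntegral_mul_ofReal (hw : IsWeight w) {E : Set (Fin d → ℝ)}
    (hE : MeasurableSet E) (g : (Fin d → ℝ) → ℝ≥0∞) :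
    ∫⁻ y in E, g y * ENNReal.ofReal (w y) = ∫⁻ y in E, g y ∂wMeasure w := by
  rw [wMeasure, restrict_withDensity hE, lintegral_withDensity_eq_lintegral_mul_non_measurable₀ _
    (hw.1.aestronglyMeasurable.aemeasurable.ennreal_ofReal.restrict)
    (.of_forall fun _ => ofReal_lt_top)]
  simp only [Pi.mul_apply, mul_comm]

theorem IsWeight.wMeasure_cube_ne_zero (hw : IsWeight w) (Q : Cube d) :
    wMeasure w Q.toSet ≠ 0 :=
  fun h => Q.volume_toSet_ne_zero <| withDensity_absolutelyContinuous'
    hw.1.aestronglyMeasurable.aemeasurable.ennreal_ofReal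
    (hw.2.mono fun _ hx => (ENNReal.ofReal_pos.2 hx).ne') h

theorem IsWeight.wMeasure_cube_ne_top (hw : IsWeight w) (Q : Cube d) :
    wMeasure w Q.toSet ≠ ∞ := by
  rw [wMeasure_apply Q.measurableSet_toSet]
  exact ((hw.1.integrableOn_isCompact isCompact_Icc).mono_set
    Q.toSet_subset_Icc).lintegral_lt_top.ne

end Weight

namespace DyadicLattice

variable {d : ℕ} (D : DyadicLattice d) {w f : (Fin d → ℝ) → ℝ} {α : ℝ}

theorem MwDyadic_eq_iSup (hw : IsWeight w) (x : Fin d → ℝ) :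
    MwDyadic D α w f x = ⨆ k, wMeasure w (D.cubeAt k x).toSet ^ (α / d - 1) *
      ∫⁻ y in (D.cubeAt k x).toSet, ‖f y‖ₑ ∂wMeasure w := by
  refine (iSup_congr fun Q => iSup_congr fun _ => iSup_congr fun _ => ?_).trans
    (D.iSup_mem_cubes_eq_iSup_cubeAt (fun Q => wMeasure w Q.toSet ^ (α / d - 1) *
      ∫⁻ y in Q.toSet, ‖f y‖ₑ ∂wMeasure w) x)
  rw [wMeasure_apply Q.measurableSet_toSet, ← hw.setLIntegral_mul_ofReal Q.measurableSet_toSet]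
  rfl

theorem MwDyadic_le_eLpNorm (hw : IsWeight w) {p : ℝ≥0∞} (hp : 1 ≤ p)
    (hf : AEStronglyMeasurable f (wMeasure w)) (hα : α / d = p.toReal⁻¹) (x : Fin d → ℝ) :
    MwDyadic D α w f x ≤ eLpNorm f p (wMeasure w) := by
  rw [D.MwDyadic_eq_iSup hw]
  exact iSup_le fun k => rpow_sub_one_mul_setLIntegral_enorm_le_eLpNorm hp hf
    (hw.wMeasure_cube_ne_zero _) (hw.wMeasure_cube_ne_top _) hα

theorem rpow_mul_wMeasure_setOf_lt_MwDyadic_le (hw : IsWeight w)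
    (hquad : ∀ x, wInt w (D.quadrant x) = ∞) {p q : ℝ≥0∞} (hp : 1 ≤ p) (hpq : p ≤ q)
    (hq : q ≠ ∞) (hexp : p.toReal⁻¹ = q.toReal⁻¹ + α / d) (hf : MemLp f p (wMeasure w))
    {t : ℝ≥0∞} (ht : t ≠ 0) :
    t ^ q.toReal * wMeasure w {x | t < MwDyadic D α w f x} ≤
      eLpNorm f p (wMeasure w) ^ q.toReal := by
  set ν := wMeasure w
  set r := q.toReal
  have hp0 : p ≠ 0 := (zero_lt_one.trans_le hp).ne'
  have hpT : p ≠ ∞ := ne_top_of_le_ne_top hq hpq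
  have hr : 0 < r := ENNReal.toReal_pos (zero_lt_one.trans_le (hp.trans hpq)).ne' hq
  set P : Cube d → Prop :=
    fun Q => t < ν Q.toSet ^ (α / d - 1) * ∫⁻ y in Q.toSet, ‖f y‖ₑ ∂ν
  have hPle : ∀ Q, P Q → t ^ r * ν Q.toSet ≤ eLpNorm f p (ν.restrict Q.toSet) ^ r :=
    fun Q hQ => rpow_mul_measure_le_of_lt_rpow_sub_one_mul_setLIntegral hp hf.1
      (hw.wMeasure_cube_ne_zero Q) (hw.wMeasure_cube_ne_top Q) hr hexp hQ
  have hbdd : ∀ x, BddBelow {k | P (D.cubeAt k x)} := by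
    intro x
    have hquad' : ν (D.quadrant x) = ∞ := by
      rw [wMeasure_apply (D.measurableSet_quadrant x), hquad]
    have hN : eLpNorm f p ν ^ r ≠ ∞ := ENNReal.rpow_ne_top_of_nonneg hr.le hf.2.ne
    have ht' : t ^ r ≠ 0 := (ENNReal.rpow_pos_of_nonneg (pos_iff_ne_zero.2 ht) hr.le).ne'
    refine (D.bddBelow_setOf_measure_cubeAt_le hquad' (ENNReal.div_ne_top hN ht')).mono
      fun k hk => ?_
    rw [mem_ofPred_eq, ENNReal.le_div_iff_mul_le (.inl ht') (.inr hN), mul_comm]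
    exact (hPle _ hk).trans
      (ENNReal.rpow_le_rpow (eLpNorm_mono_measure f Measure.restrict_le_self) hr.le)
  obtain ⟨M, hMc, hMd, hMP, hcover⟩ := D.exists_pairwiseDisjoint_cover P hbdd
  have hlevel : {x | t < MwDyadic D α w f x} ⊆ ⋃ Q ∈ M, Q.toSet := fun x hx =>
    hcover (by simpa only [mem_ofPred_eq, D.MwDyadic_eq_iSup hw, lt_iSup_iff] using hx)
  calc t ^ r * ν {x | t < MwDyadic D α w f x} ≤ t ^ r * ∑' Q : M, ν (Q : Cube d).toSet := by
        gcongr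
        exact (measure_mono hlevel).trans (measure_biUnion_le ν hMc _)
    _ = ∑' Q : M, t ^ r * ν (Q : Cube d).toSet := ENNReal.tsum_mul_left.symm
    _ ≤ ∑' Q : M, eLpNorm f p (ν.restrict (Q : Cube d).toSet) ^ r :=
        ENNReal.tsum_le_tsum fun Q => hPle Q (hMP Q Q.2)
    _ ≤ eLpNorm f p ν ^ r := tsum_eLpNorm_restrict_rpow_le hMc
        (fun Q _ => Q.measurableSet_toSet) hMd hp0 hpT (ENNReal.toReal_mono hq hpq)

end DyadicLattice

theorem weak_type_weighted_dyadic_fractional_maximal_general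
    {d : ℕ} (D : DyadicLattice d)
    (w : (Fin d → ℝ) → ℝ) (hw : IsWeight w)
    (hquad : ∀ x : Fin d → ℝ, wInt w (D.quadrant x) = ∞)
    (p q : ℝ≥0∞) (hp : 1 ≤ p) (hpq : p ≤ q)
    (α : ℝ) (hα0 : 0 ≤ α)
    (hexp : p⁻¹ = q⁻¹ + ENNReal.ofReal (α / d))
    (f : (Fin d → ℝ) → ℝ) (hf : MemLp f p (wMeasure w)) :
    wnormENN (MwDyadic D α w f) q (wMeasure w) ≤ eLpNorm f p (wMeasure w) := by
  have hq0 : q ≠ 0 := (zero_lt_one.trans_le (hp.trans hpq)).ne'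
  have hexpR : p.toReal⁻¹ = q.toReal⁻¹ + α / d :=
    ENNReal.toReal_inv_eq_add_of_inv_eq hq0 (div_nonneg hα0 d.cast_nonneg) hexp
  rcases eq_or_ne q ∞ with rfl | hq
  · rw [wnormENN, if_pos rfl]
    refine essSup_le_of_ae_le _ (.of_forall fun x => D.MwDyadic_le_eLpNorm hw hp hf.1 ?_ x)
    simpa using hexpR.symm
  · exact wnormENN_le_of_forall_rpow_mul_le hq0 hq fun t ht =>
      D.rpow_mul_wMeasure_setOf_lt_MwDyadic_le hw hquad hp hpq hq hexpR hf ht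

/-- weak type estimate for the weighted dyadic fractional maximal operator. -/
theorem weak_type_weighted_dyadic_fractional_maximal
    {d : ℕ} (hd : 0 < d) (D : DyadicLattice d)
    (w : (Fin d → ℝ) → ℝ) (hw : IsWeight w)
    (hquad : ∀ x : Fin d → ℝ, wInt w (D.quadrant x) = ∞)
    (p q : ℝ≥0∞) (hp : 1 ≤ p) (hpq : p ≤ q)
    (α : ℝ) (hα0 : 0 ≤ α) (hαd : α ≤ d)
    (hexp : p⁻¹ = q⁻¹ + ENNReal.ofReal (α / d))
    (f : (Fin d → ℝ) → ℝ) (hf : MemLp f p (wMeasure w)) :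
    wnormENN (MwDyadic D α w f) q (wMeasure w) ≤ eLpNorm f p (wMeasure w) :=
  weak_type_weighted_dyadic_fractional_maximal_general D w hw hquad p q hp hpq α hα0 hexp f hf
end

section
/- (Three lattice theorem.) Let D be a dyadic lattice in ℝ^d, and for each P ∈ D let P̃ = x(P) + 3(P − x(P)) be its threefold expansion from its corner. Then there exist 3^d dyadic lattices D^1, …, D^{3^d} such that {P̃ : P ∈ D} = ⋃_{j=1}^{3^d} D^j. Moreover, for every Q ∈ D and every j ∈ {1,…,3^d} there is a unique cube P ∈ D^j with Q ⊆ P and l(P) = 3 l(Q). -/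
open MeasureTheory ENNReal NNReal Set

noncomputable section ThreeLatticeAux

namespace ThreeLattice

variable {d : ℕ}

lemma cube_ext {P Q : Cube d} (h1 : P.corner = Q.corner) (h2 : P.side = Q.side) : P = Q := by
  cases P; cases Q; simp_all

lemma cast_eq_of_dvd {x y : ℤ} (h : (3:ℤ) ∣ (x - y)) : (x : ZMod 3) = (y : ZMod 3) := by
  have := (ZMod.intCast_zmod_eq_zero_iff_dvd (x - y) 3).mpr (by exact_mod_cast h)
  push_cast at this; linear_combination this

lemma dvd_of_cast_eq {x y : ℤ} (h : (x : ZMod 3) = (y : ZMod 3)) : (3:ℤ) ∣ (x - y) := by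
  have := (ZMod.intCast_zmod_eq_zero_iff_dvd (x - y) 3).mp (by push_cast; rw [h]; ring)
  exact_mod_cast this

lemma lift_res (v : ZMod 3) : (((v.val : ℤ)) : ZMod 3) = v := by
  push_cast; simp [ZMod.natCast_val, ZMod.cast_id]

variable (D : DyadicLattice d)

def B (k : ℤ) : Cube d := (D.gen_translates k).choose

lemma B_mem (k : ℤ) : B D k ∈ D.gen k := (D.gen_translates k).choose_spec.1

lemma gen_eq (k : ℤ) :
    D.gen k = {R | ∃ m : Fin d → ℤ, R = (B D k).translate m} :=
  (D.gen_translates k).choose_spec.2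

def s (k : ℤ) : ℝ := (B D k).side

lemma s_pos (k : ℤ) : 0 < s D k := (B D k).side_pos

lemma side_eq {k : ℤ} {R : Cube d} (h : R ∈ D.gen k) : R.side = s D k := by
  rw [gen_eq] at h; obtain ⟨m, rfl⟩ := h; rfl

def QQ (k : ℤ) : Cube d := (D.cornerChild_mem k).choose
lemma QQ_mem (k : ℤ) : QQ D k ∈ D.gen k := (D.cornerChild_mem k).choose_spec.1
lemma QQ_child (k : ℤ) : (QQ D k).cornerChild ∈ D.gen (k+1) :=
  (D.cornerChild_mem k).choose_spec.2

lemma s_half (k : ℤ) : s D (k+1) = s D k / 2 := by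
  have h1 : (QQ D k).side = s D k := side_eq D (QQ_mem D k)
  have h2 : (QQ D k).cornerChild.side = s D (k+1) := side_eq D (QQ_child D k)
  have h3 : (QQ D k).cornerChild.side = (QQ D k).side / 2 := rfl
  rw [h3, h1] at h2; linarith

lemma s_anti : StrictAnti (s D) :=
  strictAnti_int_of_succ_lt (fun k => by rw [s_half]; linarith [s_pos D k])

lemma aE (k : ℤ) : ∃ m : Fin d → ℤ, QQ D k = (B D k).translate m := by
  have h := QQ_mem D k; rw [gen_eq] at h; exact h

def a (k : ℤ) : Fin d → ℤ := (aE D k).choose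
lemma ha (k : ℤ) : QQ D k = (B D k).translate (a D k) := (aE D k).choose_spec

lemma bE (k : ℤ) : ∃ m : Fin d → ℤ, (QQ D k).cornerChild = (B D (k+1)).translate m := by
  have h := QQ_child D k; rw [gen_eq] at h; exact h

def b (k : ℤ) : Fin d → ℤ := (bE D k).choose
lemma hb (k : ℤ) : (QQ D k).cornerChild = (B D (k+1)).translate (b D k) := (bE D k).choose_spec

lemma corner_rel (k : ℤ) (i : Fin d) :
    (B D (k+1)).corner i + s D (k+1) * (b D k i : ℝ) =
      (B D k).corner i + s D k * (a D k i : ℝ) := by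
  have h1 : (QQ D k).corner i = (B D k).corner i + (B D k).side * (a D k i : ℝ) :=
    congrFun (congrArg Cube.corner (ha D k)) i
  have h2 : (QQ D k).corner i = (B D (k+1)).corner i + (B D (k+1)).side * (b D k i : ℝ) :=
    congrFun (congrArg Cube.corner (hb D k)) i
  show (B D (k+1)).corner i + (B D (k+1)).side * (b D k i : ℝ)
      = (B D k).corner i + (B D k).side * (a D k i : ℝ)
  rw [← h1, ← h2]

def e (k : ℤ) : Fin d → ZMod 3 := fun i => (b D k i : ZMod 3) - 2 * (a D k i : ZMod 3)

def cpos : ℕ → Fin d → ZMod 3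
  | 0 => fun _ => 0
  | n+1 => fun i => 2 * cpos n i + e D (n : ℤ) i

def cneg : ℕ → Fin d → ZMod 3
  | 0 => fun _ => 0
  | n+1 => fun i => 2 * (cneg n i - e D (-(n+1 : ℤ)) i)

def c : ℤ → Fin d → ZMod 3
  | .ofNat n => cpos D n
  | .negSucc n => cneg D (n+1)

lemma c_ofNat (n : ℕ) : c D (n : ℤ) = cpos D n := rfl

lemma c_negSucc (n : ℕ) : c D (Int.negSucc n) = cneg D (n+1) := rfl

lemma c_neg (n : ℕ) : c D (-(n : ℤ)) = cneg D n := by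
  cases n with
  | zero => rfl
  | succ m =>
      have : (-(((m:ℕ)+1 : ℕ) : ℤ)) = Int.negSucc m := by
        rw [Int.negSucc_eq]; push_cast; ring
      rw [show ((m+1 : ℕ) : ℤ) = ((m:ℕ) + 1 : ℕ) by norm_num, this, c_negSucc]

lemma zmod_key (x y : ZMod 3) : 2 * (2 * (x - y)) + y = x := by revert x y; decide

lemma c_rec (k : ℤ) (i : Fin d) : c D (k + 1) i = 2 * c D k i + e D k i := by
  cases k with
  | ofNat n =>
      have h1 : (Int.ofNat n) + 1 = ((n+1 : ℕ) : ℤ) := by simp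
      rw [h1, c_ofNat]
      rfl
  | negSucc n =>
      have hn : Int.negSucc n = -((n:ℤ)+1) := Int.negSucc_eq n
      have h1 : Int.negSucc n + 1 = -((n:ℤ)) := by rw [hn]; ring
      have h2 : -((n:ℤ)+1) = -(((n+1 : ℕ)) : ℤ) := by push_cast; ring
      rw [h1, c_neg, hn, h2, c_neg]
      show cneg D n i = 2 * (2 * (cneg D n i - e D (-((n:ℤ)+1)) i)) + e D (Int.negSucc n) i
      rw [show (-((n:ℤ)+1)) = Int.negSucc n by rw [hn]]
      exact (zmod_key _ _).symm

def eps (k : ℤ) : ZMod 3 := (-1) ^ k.natAbs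

lemma eps_succ (k : ℤ) : eps (k+1) = - eps k := by
  unfold eps
  rcases Int.even_or_odd k with h | h
  · have h1 : Even k.natAbs := Int.natAbs_even.mpr h
    have h2 : Odd (k+1).natAbs := Int.natAbs_odd.mpr h.add_one
    rw [h1.neg_one_pow, h2.neg_one_pow]
  · have h1 : Odd k.natAbs := Int.natAbs_odd.mpr h
    have h2 : Even (k+1).natAbs := Int.natAbs_even.mpr h.add_one
    rw [h1.neg_one_pow, h2.neg_one_pow]; decide

lemma eps_sq (k : ℤ) : eps k * eps k = 1 := by
  unfold eps; rw [← pow_add]; exact Even.neg_one_pow ⟨_, rfl⟩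

def u (j : Fin d → ZMod 3) (k : ℤ) : Fin d → ZMod 3 := fun i => eps k * j i + c D k i

lemma three_zero : (3 : ZMod 3) = 0 := by decide

lemma u_rec (j : Fin d → ZMod 3) (k : ℤ) (i : Fin d) :
    u D j (k+1) i = 2 * u D j k i + e D k i := by
  unfold u
  rw [eps_succ, c_rec]
  linear_combination (-(eps k * j i)) * three_zero

lemma u_surj (v : Fin d → ZMod 3) (k : ℤ) :
    u D (fun i => eps k * (v i - c D k i)) k = v := by
  funext i
  unfold u
  rw [← mul_assoc, eps_sq, one_mul, sub_add_cancel]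

/-- Generation `k` of the `j`-th shifted lattice. -/
def Dgen (j : Fin d → ZMod 3) (k : ℤ) : Set (Cube d) :=
  {R | ∃ m : Fin d → ℤ, (∀ i, (m i : ZMod 3) = u D j k i) ∧ R = ((B D k).translate m).expand3}

lemma DgenTranslates (j : Fin d → ZMod 3) (k : ℤ) :
    ∃ Q ∈ Dgen D j k, Dgen D j k = {R | ∃ m : Fin d → ℤ, R = Q.translate m} := by
  set m0 : Fin d → ℤ := fun i => ((u D j k i).val : ℤ) with hm0def
  have hm0 : ∀ i, (m0 i : ZMod 3) = u D j k i := fun i => lift_res _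
  refine ⟨((B D k).translate m0).expand3, ⟨m0, hm0, rfl⟩, ?_⟩
  ext R
  constructor
  · rintro ⟨m, hm, rfl⟩
    refine ⟨fun i => (m i - m0 i) / 3, ?_⟩
    have hdvd : ∀ i, (3:ℤ) ∣ (m i - m0 i) := fun i => dvd_of_cast_eq ((hm i).trans (hm0 i).symm)
    apply cube_ext
    · funext i
      have h3 : (3:ℤ) * ((m i - m0 i) / 3) = m i - m0 i := Int.mul_ediv_cancel' (hdvd i)
      show (B D k).corner i + (B D k).side * (m i : ℝ)
          = ((B D k).corner i + (B D k).side * (m0 i : ℝ))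
            + (3 * (B D k).side) * (((m i - m0 i) / 3 : ℤ) : ℝ)
      have h4 : 3 * (((m i - m0 i) / 3 : ℤ) : ℝ) = (m i : ℝ) - (m0 i : ℝ) := by
        exact_mod_cast h3
      have h5 : (m i : ℝ) = (m0 i : ℝ) + 3 * (((m i - m0 i) / 3 : ℤ) : ℝ) := by linarith
      rw [h5]; ring
    · rfl
  · rintro ⟨m', rfl⟩
    refine ⟨fun i => m0 i + 3 * m' i, fun i => ?_, ?_⟩
    · push_cast
      rw [hm0 i, three_zero]; ring
    · apply cube_ext
      · funext i
        show ((B D k).corner i + (B D k).side * (m0 i : ℝ)) + (3 * (B D k).side) * (m' i : ℝ)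
            = (B D k).corner i + (B D k).side * ((m0 i + 3 * m' i : ℤ) : ℝ)
        push_cast; ring
      · rfl

lemma DgenChild (j : Fin d → ZMod 3) (k : ℤ) :
    ∃ Q ∈ Dgen D j k, Q.cornerChild ∈ Dgen D j (k+1) := by
  set m0 : Fin d → ℤ := fun i => ((u D j k i).val : ℤ) with hm0def
  have hm0 : ∀ i, (m0 i : ZMod 3) = u D j k i := fun i => lift_res _
  set m1 : Fin d → ℤ := fun i => 2 * m0 i - 2 * a D k i + b D k i with hm1def
  have hm1 : ∀ i, (m1 i : ZMod 3) = u D j (k+1) i := by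
    intro i
    rw [u_rec]
    show ((2 * m0 i - 2 * a D k i + b D k i : ℤ) : ZMod 3) = _
    push_cast
    rw [hm0 i]
    unfold e
    ring
  refine ⟨((B D k).translate m0).expand3, ⟨m0, hm0, rfl⟩, m1, hm1, ?_⟩
  apply cube_ext
  · funext i
    show (B D k).corner i + (B D k).side * (m0 i : ℝ)
        = (B D (k+1)).corner i + (B D (k+1)).side * ((2 * m0 i - 2 * a D k i + b D k i : ℤ) : ℝ)
    have h1 := corner_rel D k i
    have h2 := s_half D k
    show (B D k).corner i + s D k * (m0 i : ℝ)
        = (B D (k+1)).corner i + s D (k+1) * ((2 * m0 i - 2 * a D k i + b D k i : ℤ) : ℝ)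
    rw [h2] at h1 ⊢
    push_cast
    linear_combination -h1
  · show (3 * (B D k).side) / 2 = 3 * (B D (k+1)).side
    have h2 := s_half D k
    show (3 * s D k) / 2 = 3 * s D (k+1)
    rw [h2]; ring

/-- The `j`-th shifted lattice. -/
def DL (j : Fin d → ZMod 3) : DyadicLattice d where
  gen := Dgen D j
  gen_translates := DgenTranslates D j
  cornerChild_mem := DgenChild D j

lemma toSet_subset_lower {P Q : Cube d} (h : Q.toSet ⊆ P.toSet) (i : Fin d) :
    P.corner i ≤ Q.corner i := by
  have hc : Q.corner ∈ Q.toSet := fun i' => ⟨le_refl _, by linarith [Q.side_pos]⟩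
  exact (h hc i).1

lemma toSet_subset_upper {P Q : Cube d} (h : Q.toSet ⊆ P.toSet) (i : Fin d) :
    Q.corner i + Q.side ≤ P.corner i + P.side := by
  by_contra hc
  push_neg at hc
  set ε := min Q.side (Q.corner i + Q.side - (P.corner i + P.side)) with hε
  have hε0 : 0 < ε := lt_min Q.side_pos (by linarith)
  have hεs : ε ≤ Q.side := min_le_left _ _
  have hε2 : ε ≤ Q.corner i + Q.side - (P.corner i + P.side) := min_le_right _ _
  have hy : Function.update Q.corner i (Q.corner i + Q.side - ε) ∈ Q.toSet := by
    intro i'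
    rcases eq_or_ne i' i with rfl | hne
    · rw [Function.update_self]; constructor <;> linarith
    · rw [Function.update_of_ne hne]
      exact ⟨le_refl _, by linarith [Q.side_pos]⟩
  have h2 := (h hy) i
  rw [Function.update_self] at h2
  linarith [h2.2]

end ThreeLattice

end ThreeLatticeAux

open ThreeLattice

/-- the three lattice theorem. -/
theorem three_lattice_theorem {d : ℕ} (D : DyadicLattice d) :
    ∃ Ds : Fin (3 ^ d) → DyadicLattice d,
      Cube.expand3 '' D.cubes = (⋃ j, (Ds j).cubes) ∧
      ∀ Q ∈ D.cubes, ∀ j : Fin (3 ^ d),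
        ∃! P : Cube d, P ∈ (Ds j).cubes ∧ Q.toSet ⊆ P.toSet ∧ P.side = 3 * Q.side := by
  classical
  have card_eq : Fintype.card (Fin d → ZMod 3) = 3 ^ d := by simp
  let eqv : Fin (3 ^ d) ≃ (Fin d → ZMod 3) := (Fintype.equivFinOfCardEq card_eq).symm
  refine ⟨fun jj => DL D (eqv jj), ?_, ?_⟩
  · ext R
    simp only [Set.mem_image, Set.mem_iUnion]
    constructor
    · rintro ⟨P, hP, rfl⟩
      obtain ⟨k, hk⟩ := Set.mem_iUnion.mp hP
      rw [gen_eq] at hk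
      obtain ⟨m, rfl⟩ := hk
      set v : Fin d → ZMod 3 := fun i => (m i : ZMod 3) with hv
      set j : Fin d → ZMod 3 := fun i => eps k * (v i - c D k i) with hj
      refine ⟨eqv.symm j, ?_⟩
      rw [Equiv.apply_symm_apply]
      exact Set.mem_iUnion.mpr ⟨k, ⟨m, fun i => (congrFun (u_surj D v k) i).symm, rfl⟩⟩
    · rintro ⟨jj, hR⟩
      obtain ⟨k, hk⟩ := Set.mem_iUnion.mp hR
      obtain ⟨m, hres, rfl⟩ := hk
      exact ⟨(B D k).translate m, Set.mem_iUnion.mpr ⟨k, by rw [gen_eq]; exact ⟨m, rfl⟩⟩, rfl⟩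
  · intro Q hQ jj
    obtain ⟨k, hk⟩ := Set.mem_iUnion.mp hQ
    rw [gen_eq] at hk
    obtain ⟨aq, rfl⟩ := hk
    set j : Fin d → ZMod 3 := eqv jj with hj
    set z : Fin d → ℤ := fun i => ((u D j k i).val : ℤ) with hz
    set m : Fin d → ℤ := fun i => aq i - (aq i - z i) % 3 with hm
    have hres : ∀ i, (m i : ZMod 3) = u D j k i := by
      intro i
      have h1 : (3:ℤ) ∣ (m i - z i) := by simp only [hm]; omega
      rw [cast_eq_of_dvd h1]
      exact lift_res _
    have hbd : ∀ i, m i ≤ aq i ∧ aq i ≤ m i + 2 := by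
      intro i
      simp only [hm]
      omega
    set s0 : ℝ := (B D k).side with hs0
    have hs0pos : 0 < s0 := (B D k).side_pos
    set P : Cube d := ((B D k).translate m).expand3 with hP
    refine ⟨P, ⟨Set.mem_iUnion.mpr ⟨k, ⟨m, hres, rfl⟩⟩, ?_, ?_⟩, ?_⟩
    · intro y hy i
      have h1 : (B D k).corner i + s0 * (aq i : ℝ) ≤ y i ∧
          y i < ((B D k).corner i + s0 * (aq i : ℝ)) + s0 := hy i
      have hm1 : (m i : ℝ) ≤ (aq i : ℝ) := by exact_mod_cast (hbd i).1
      have hm2 : (aq i : ℝ) ≤ (m i : ℝ) + 2 := by exact_mod_cast (hbd i).2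
      have key1 : s0 * (m i : ℝ) ≤ s0 * (aq i : ℝ) :=
        mul_le_mul_of_nonneg_left hm1 hs0pos.le
      have key2 : s0 * (aq i : ℝ) ≤ s0 * ((m i : ℝ) + 2) :=
        mul_le_mul_of_nonneg_left hm2 hs0pos.le
      constructor
      · show (B D k).corner i + s0 * (m i : ℝ) ≤ y i
        linarith [h1.1]
      · show y i < ((B D k).corner i + s0 * (m i : ℝ)) + 3 * s0
        nlinarith [h1.2]
    · rfl
    · rintro P' ⟨hmem, hsub, hside⟩
      obtain ⟨k', hk'⟩ := Set.mem_iUnion.mp hmem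
      obtain ⟨m', hres', rfl⟩ := hk'
      have hkk : k' = k := by
        have h1 : 3 * s D k' = 3 * s D k := hside
        exact (s_anti D).injective (by linarith)
      rw [hkk] at hres' hsub ⊢
      have hlow : ∀ i, m' i ≤ aq i := by
        intro i
        have h1 : (B D k).corner i + s0 * (m' i : ℝ) ≤ (B D k).corner i + s0 * (aq i : ℝ) :=
          toSet_subset_lower hsub i
        have h2 : s0 * (m' i : ℝ) ≤ s0 * (aq i : ℝ) := by linarith
        exact_mod_cast le_of_mul_le_mul_left h2 hs0pos
      have hupp : ∀ i, aq i ≤ m' i + 2 := by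
        intro i
        have h1 : ((B D k).corner i + s0 * (aq i : ℝ)) + s0 ≤
            ((B D k).corner i + s0 * (m' i : ℝ)) + 3 * s0 :=
          toSet_subset_upper hsub i
        have h2 : s0 * (aq i : ℝ) ≤ s0 * ((m' i : ℝ) + 2) := by nlinarith
        exact_mod_cast le_of_mul_le_mul_left h2 hs0pos
      have hmm : m' = m := by
        funext i
        have hc : (m' i : ZMod 3) = (m i : ZMod 3) := (hres' i).trans (hres i).symm
        have hd := dvd_of_cast_eq hc
        have h1 := hbd i
        have h2 := hlow i
        have h3 := hupp i
        omega
      rw [hmm]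
end
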